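/- If the environment IP is L-dependent in direction ℓ (the sigma-fields σ(ω_x : x·ℓ ≤ 0) and σ(ω_x : x·ℓ ≥ L) are independent) and elliptic with constant κ, then for any path w of range M ending at 0 and any k ≤ 0, the density of the a-posteriori measure IP_w on the half-space sigma-field S_k is bounded: dIP_w|_{S_k} / dIP|_{S_k} ≤ κ^{−card(w ∩ H_{k−L})}, where w ∩ H_{k−L} is the set of path points x_i with x_i·ℓ ≥ k − L. -/

import Mathlib

open MeasureTheory Filter Set
open scoped ENNReal

noncomputable section

abbrev Zd (d : ℕ) := Fin d → ℤ
abbrev Env (d : ℕ) := Zd d → Zd d → ℝ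
abbrev Traj (d : ℕ) := ℕ → Zd d

/-- shift of the environment by `k`: `(T^k ω) x e = ω (k+x) e`. -/
def shiftE {d : ℕ} (k : Zd d) (ω : Env d) : Env d := fun x e => ω (k + x) e

/-- the sup-norm ball of radius `M` in `ℤ^d`, the set of admissible jumps. -/
def box (d M : ℕ) : Finset (Zd d) := Finset.Icc (fun _ => -(M : ℤ)) (fun _ => (M : ℤ))

/-- scalar product `x · ℓ`. -/
def dotl {d : ℕ} (x : Zd d) (ℓ : Fin d → ℝ) : ℝ := ∑ i, (x i : ℝ) * ℓ i

/-- the local drift in direction `ℓ`: `D(ω)·ℓ`. -/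
def driftl {d : ℕ} (M : ℕ) (ℓ : Fin d → ℝ) (ω : Env d) : ℝ :=
  ∑ e ∈ box d M, dotl e ℓ * ω 0 e

/-- `μ` is the law of the quenched walk in environment `ω` started at `x0`:
a probability measure with `X_0 = x0` a.s., and the Markov property with
transition probabilities `ω i (j - i)` from `i` to `j`. -/
def IsWalk {d : ℕ} (μ : Measure (Traj d)) (ω : Env d) (x0 : Zd d) : Prop :=
  IsProbabilityMeasure μ ∧ μ {w | w 0 = x0} = 1 ∧
  ∀ (n : ℕ) (A : Set (Traj d)), MeasurableSet A →
    (∀ w w' : Traj d, (∀ m ≤ n, w m = w' m) → (w ∈ A ↔ w' ∈ A)) →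
    ∀ i j : Zd d,
      μ (A ∩ {w | w n = i ∧ w (n + 1) = j}) =
        ENNReal.ofReal (ω i (j - i)) * μ (A ∩ {w | w n = i})

/-- a nice environment of range `M`: nonnegative transition probabilities of
total mass one, supported on jumps of sup-norm at most `M`. -/
def GoodEnv {d : ℕ} (M : ℕ) (ω : Env d) : Prop :=
  (∀ x e, 0 ≤ ω x e) ∧ (∀ x, ∑ e ∈ box d M, ω x e = 1) ∧
  (∀ x e, e ∉ box d M → ω x e = 0)

/-- `U` is `M`-connected: there is a path of range `M` through all its points. -/
def MConn {d : ℕ} (M : ℕ) (U : Finset (Zd d)) : Prop :=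
  ∃ (n : ℕ) (p : ℕ → Zd d), (∀ i ≤ n, p i ∈ U) ∧
    (∀ i < n, p (i + 1) - p i ∈ box d M) ∧ (∀ x ∈ U, ∃ i ≤ n, p i = x)

/-- `E^ω_{x0}[Σ_{j=0}^{T_U} 1(X_j = x)]`, the expected number of visits to `x`
before exiting `U`. -/
def exitGreen {d : ℕ} (μ : Measure (Traj d)) (U : Set (Zd d)) (x : Zd d) : ℝ≥0∞ :=
  ∑' j : ℕ, μ {w | w j = x ∧ ∀ m < j, w m ∈ U}

/-- Kalikow's condition in direction `ℓ` with constant `ε`, for the annealed walk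
with environment distribution `IP` and quenched laws `P ω` (started at `0`). -/
def KalikowCond {d : ℕ} (IP : Measure (Env d)) (P : Env d → Measure (Traj d))
    (M : ℕ) (ℓ : Fin d → ℝ) (ε : ℝ) : Prop :=
  0 < ε ∧ ∀ U : Finset (Zd d), (0 : Zd d) ∈ U → MConn M U → ∀ x ∈ U,
    ε * ∫ ω, (exitGreen (P ω) (↑U) x).toReal ∂IP ≤
      ∫ ω, driftl M ℓ (shiftE x ω) * (exitGreen (P ω) (↑U) x).toReal ∂IP

/-- shift invariance of the environment measure. -/
def ShiftInv {d : ℕ} (IP : Measure (Env d)) : Prop :=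
  ∀ k : Zd d, Measure.map (shiftE k) IP = IP

/-- ergodicity of the environment measure under the shifts. -/
def ErgEnv {d : ℕ} (IP : Measure (Env d)) : Prop :=
  ShiftInv IP ∧ ∀ S : Set (Env d), MeasurableSet S →
    (∀ k : Zd d, shiftE k ⁻¹' S = S) → IP S = 0 ∨ IP S = 1

/-- invariance of a measure for the environment process viewed from the particle,
whose kernel is `π(ω, A) = Σ_{|e| ≤ M} π_{0e}(ω) 1_A(T^e ω)`. -/
def EnvInvariant {d : ℕ} (M : ℕ) (IPinf : Measure (Env d)) : Prop :=
  ∀ A : Set (Env d), MeasurableSet A →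
    ∫⁻ ω, ∑ e ∈ box d M, ENNReal.ofReal (ω 0 e) * A.indicator 1 (shiftE e ω) ∂IPinf
      = IPinf A

/-- weak ellipticity in direction `ℓ`: a.s. `π_{0j} > 0` for all unit vectors `j`
with `j·ℓ ≥ 0`. -/
def WeakElliptic {d : ℕ} (IP : Measure (Env d)) (ℓ : Fin d → ℝ) : Prop :=
  ∀ᵐ ω ∂IP, ∀ e : Zd d, (∑ i, (e i) * (e i)) = 1 → 0 ≤ dotl e ℓ → 0 < ω 0 e

/-- the half-space σ-field `S_k = σ(ω_x : x·ℓ ≥ k)`. -/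
def Sfield {d : ℕ} (ℓ : Fin d → ℝ) (k : ℝ) : MeasurableSpace (Env d) :=
  ⨆ x ∈ {x : Zd d | k ≤ dotl x ℓ}, MeasurableSpace.comap (fun ω : Env d => ω x) inferInstance

/-- the positions `x_i` of the path with step sequence `s`, ending at `0`. -/
def pathPos {d n : ℕ} (s : Fin n → Zd d) (i : ℕ) : Zd d :=
  -∑ j ∈ Finset.univ.filter (fun j : Fin n => i ≤ (j : ℕ)), s j

/-- the quenched probability `π_w(ω)` of following the path with steps `s`. -/
def pathWeight {d n : ℕ} (s : Fin n → Zd d) (ω : Env d) : ℝ :=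
  ∏ j : Fin n, ω (pathPos s (j : ℕ)) (s j)

/-- the a-posteriori measure `IP_w` with density `π_w / IE(π_w)` w.r.t. `IP`. -/
def postMeasure {d n : ℕ} (IP : Measure (Env d)) (s : Fin n → Zd d) :
    Measure (Env d) :=
  IP.withDensity fun ω =>
    ENNReal.ofReal (pathWeight s ω / ∫ ω', pathWeight s ω' ∂IP)

/-- the σ-field generated by `ω_x` for `x·ℓ ≤ 0`. -/
def SfieldLow {d : ℕ} (ℓ : Fin d → ℝ) : MeasurableSpace (Env d) :=
  ⨆ x ∈ {x : Zd d | dotl x ℓ ≤ 0},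
    MeasurableSpace.comap (fun ω : Env d => ω x) inferInstance

/-!
Split `π_w` into the factors at the sites `x_j ∈ H_{k-L}` and the remaining "low" factors
`π_low`. Every factor lies in `(κ, 1]`, so `π_w ≤ π_low ≤ κ^{-card(w ∩ H_{k-L})} π_w`.
Shifting by the highest low site `x_{j₀}` makes `π_low` a function of `σ(ω_x : x·ℓ ≤ 0)` and
moves `A ∈ S_k` into `S_L` (as `x_{j₀}·ℓ < k - L`); by shift invariance and `L`-dependence,
`IE(π_low; A) = IP(A) IE(π_low)`. Hence
`IP_w(A) = IE(π_w; A) / IE(π_w) ≤ IE(π_low; A) / IE(π_w) = IP(A) IE(π_low) / IE(π_w)`,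
which is at most `κ^{-card(w ∩ H_{k-L})} IP(A)`.
-/

open ProbabilityTheory

section Measure

variable {α : Type*}

theorem withDensity_ofReal_div_integral_apply [MeasurableSpace α] {μ : Measure α} {f : α → ℝ}
    (hf : Integrable f μ) (hf0 : 0 ≤ᵐ[μ] f) (hpos : 0 < ∫ x, f x ∂μ) {A : Set α}
    (hA : MeasurableSet A) :
    μ.withDensity (fun x => ENNReal.ofReal (f x / ∫ x, f x ∂μ)) A =
      (∫⁻ x in A, ENNReal.ofReal (f x) ∂μ) / ∫⁻ x, ENNReal.ofReal (f x) ∂μ := by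
  have hI : (ENNReal.ofReal (∫ x, f x ∂μ))⁻¹ ≠ ⊤ := by simpa using hpos
  simp_rw [withDensity_apply _ hA, ENNReal.ofReal_div_of_pos hpos, div_eq_mul_inv,
    lintegral_mul_const' _ _ hI, ofReal_integral_eq_lintegral_ofReal hf hf0]

theorem setLIntegral_div_lintegral_le [MeasurableSpace α] {μ : Measure α} {f g : α → ℝ≥0∞}
    {C : ℝ≥0∞} {A : Set α}
    (hfg : f ≤ᵐ[μ] g) (hgf : ∀ᵐ x ∂μ, g x ≤ C * f x)
    (hgA : ∫⁻ x in A, g x ∂μ = μ A * ∫⁻ x, g x ∂μ)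
    (hf0 : ∫⁻ x, f x ∂μ ≠ 0) (hf_top : ∫⁻ x, f x ∂μ ≠ ⊤) (hC : C ≠ ⊤) :
    (∫⁻ x in A, f x ∂μ) / ∫⁻ x, f x ∂μ ≤ C * μ A := by
  rw [ENNReal.div_le_iff hf0 hf_top]
  calc ∫⁻ x in A, f x ∂μ ≤ ∫⁻ x in A, g x ∂μ := lintegral_mono_ae (ae_restrict_of_ae hfg)
    _ = μ A * ∫⁻ x, g x ∂μ := hgA
    _ ≤ μ A * ∫⁻ x, C * f x ∂μ := by gcongr μ A * ?_; exact lintegral_mono_ae hgf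
    _ = C * μ A * ∫⁻ x, f x ∂μ := by rw [lintegral_const_mul' C f hC]; ring

theorem setLIntegral_eq_measure_mul_lintegral_of_indep {m₁ m₂ mα : MeasurableSpace α}
    {μ : Measure α} (h₁ : m₁ ≤ mα) (h₂ : m₂ ≤ mα) (hind : Indep m₁ m₂ μ) {B : Set α}
    (hB : MeasurableSet[m₂] B) {h : α → ℝ≥0∞} (hh : Measurable[m₁] h) :
    ∫⁻ x in B, h x ∂μ = μ B * ∫⁻ x, h x ∂μ := by
  have hind_mul := lintegral_mul_eq_lintegral_mul_lintegral_of_independent_measurableSpace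
    h₁ h₂ hind hh (show Measurable[m₂] (B.indicator 1) from measurable_const.indicator hB)
  have hmul : ∀ x, h x * B.indicator 1 x = B.indicator h x := fun x => by
    by_cases hx : x ∈ B <;> simp [hx]
  simp only [hmul] at hind_mul
  rw [← lintegral_indicator (h₂ _ hB), hind_mul, lintegral_indicator_one (h₂ _ hB), mul_comm]

theorem setLIntegral_eq_measure_mul_lintegral_of_indep_comp
    {m₁ m₂ mα : MeasurableSpace α} {μ : Measure α}
    (h₁ : m₁ ≤ mα) (h₂ : m₂ ≤ mα) (hind : Indep m₁ m₂ μ) {T : α → α}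
    (hT : MeasurePreserving T μ μ) {A : Set α} (hA : MeasurableSet A)
    (hAT : MeasurableSet[m₂] (T ⁻¹' A)) {g : α → ℝ≥0∞} (hg : Measurable g)
    (hgT : Measurable[m₁] (g ∘ T)) :
    ∫⁻ x in A, g x ∂μ = μ A * ∫⁻ x, g x ∂μ := by
  calc ∫⁻ x in A, g x ∂μ = ∫⁻ x in T ⁻¹' A, (g ∘ T) x ∂μ :=
        (hT.setLIntegral_comp_preimage hA hg).symm
    _ = μ (T ⁻¹' A) * ∫⁻ x, (g ∘ T) x ∂μ :=
        setLIntegral_eq_measure_mul_lintegral_of_indep h₁ h₂ hind hAT hgT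
    _ = μ A * ∫⁻ x, g x ∂μ := by
        rw [hT.measure_preimage hA.nullMeasurableSet, Function.comp_def, hT.lintegral_comp hg]

end Measure

section Environment

variable {d : ℕ}

theorem dotl_add (x y : Zd d) (ℓ : Fin d → ℝ) : dotl (x + y) ℓ = dotl x ℓ + dotl y ℓ := by
  simp only [dotl, Pi.add_apply, Int.cast_add, add_mul, Finset.sum_add_distrib]

theorem dotl_neg (x : Zd d) (ℓ : Fin d → ℝ) : dotl (-x) ℓ = -dotl x ℓ := by
  simp only [dotl, Pi.neg_apply, Int.cast_neg, neg_mul, Finset.sum_neg_distrib]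

theorem measurable_env_apply (x e : Zd d) : Measurable fun ω : Env d => ω x e :=
  (measurable_pi_apply e).comp (measurable_pi_apply x)

theorem measurable_shiftE (z : Zd d) : Measurable (shiftE z : Env d → Env d) :=
  measurable_pi_lambda _ fun x => measurable_pi_apply (z + x)

theorem ShiftInv.measurePreserving {IP : Measure (Env d)} (hsh : ShiftInv IP) (z : Zd d) :
    MeasurePreserving (shiftE z) IP IP :=
  ⟨measurable_shiftE z, hsh z⟩

theorem Sfield_le (ℓ : Fin d → ℝ) (k : ℝ) :
    Sfield ℓ k ≤ (inferInstance : MeasurableSpace (Env d)) :=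
  iSup₂_le fun x _ => measurable_iff_comap_le.mp (measurable_pi_apply x)

theorem SfieldLow_le (ℓ : Fin d → ℝ) :
    SfieldLow ℓ ≤ (inferInstance : MeasurableSpace (Env d)) :=
  iSup₂_le fun x _ => measurable_iff_comap_le.mp (measurable_pi_apply x)

theorem measurable_SfieldLow_env_apply (ℓ : Fin d → ℝ) {x : Zd d} (hx : dotl x ℓ ≤ 0)
    (e : Zd d) : Measurable[SfieldLow ℓ] fun ω : Env d => ω x e :=
  (measurable_pi_apply e).comp <| measurable_iff_comap_le.mpr <|
    le_iSup₂ (f := fun y (_ : dotl y ℓ ≤ 0) =>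
      MeasurableSpace.comap (fun ω : Env d => ω y) inferInstance) x hx

theorem measurable_shiftE_Sfield (ℓ : Fin d → ℝ) {k k' : ℝ} (z : Zd d)
    (h : k' ≤ k + dotl z ℓ) : Measurable[Sfield ℓ k', Sfield ℓ k] (shiftE z) := by
  rw [measurable_iff_comap_le]
  simp only [Sfield, MeasurableSpace.comap_iSup, MeasurableSpace.comap_comp]
  refine iSup₂_le fun x (hx : k ≤ dotl x ℓ) => ?_
  exact le_iSup₂ (f := fun y (_ : k' ≤ dotl y ℓ) =>
    MeasurableSpace.comap (fun ω : Env d => ω y) inferInstance) (z + x)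
    (by rw [dotl_add]; linarith)

theorem GoodEnv.le_one {M : ℕ} {ω : Env d} (hω : GoodEnv M ω) (x e : Zd d) : ω x e ≤ 1 := by
  by_cases he : e ∈ box d M
  · rw [← hω.2.1 x]
    exact Finset.single_le_sum (fun e _ => hω.1 x e) he
  · rw [hω.2.2 x e he]
    exact zero_le_one

end Environment

section Path

variable {d n : ℕ}

def highSteps (s : Fin n → Zd d) (ℓ : Fin d → ℝ) (c : ℝ) : Finset (Fin n) :=
  Finset.univ.filter fun j => c ≤ dotl (pathPos s j) ℓ

def partialWeight (s : Fin n → Zd d) (J : Finset (Fin n)) (ω : Env d) : ℝ :=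
  ∏ j ∈ J, ω (pathPos s j) (s j)

theorem card_highSteps_le (s : Fin n → Zd d) (ℓ : Fin d → ℝ) (c : ℝ) :
    (highSteps s ℓ c).card ≤
      ((Finset.range (n + 1)).filter fun i => c ≤ dotl (pathPos s i) ℓ).card := by
  refine Finset.card_le_card_of_injOn (fun j => (j : ℕ)) (fun j hj => ?_) Fin.val_injective.injOn
  rw [Finset.mem_coe, highSteps, Finset.mem_filter] at hj
  exact Finset.mem_coe.mpr
    (Finset.mem_filter.mpr ⟨Finset.mem_range.mpr (Nat.lt_succ_of_lt j.isLt), hj.2⟩)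

theorem measurable_partialWeight (s : Fin n → Zd d) (J : Finset (Fin n)) :
    Measurable (partialWeight s J) :=
  Finset.measurable_prod _ fun _ _ => measurable_env_apply _ _

theorem pow_card_le_partialWeight {s : Fin n → Zd d} {ω : Env d} {κ : ℝ} (hκ : 0 ≤ κ)
    (hω : ∀ j : Fin n, κ ≤ ω (pathPos s j) (s j)) (J : Finset (Fin n)) :
    κ ^ J.card ≤ partialWeight s J ω := by
  rw [← Finset.prod_const]
  exact Finset.prod_le_prod (fun _ _ => hκ) fun j _ => hω j

theorem pathWeight_le_partialWeight {s : Fin n → Zd d} {ω : Env d}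
    (hω : ∀ j : Fin n, ω (pathPos s j) (s j) ∈ Set.Icc 0 1) (J : Finset (Fin n)) :
    pathWeight s ω ≤ partialWeight s J ω :=
  Finset.prod_le_prod_of_subset_of_le_one (Finset.subset_univ J) (fun j _ => (hω j).1)
    fun j _ _ => (hω j).2

theorem partialWeight_compl_le {s : Fin n → Zd d} {ω : Env d} {κ : ℝ} (hκ : 0 < κ)
    (hω : ∀ j : Fin n, κ ≤ ω (pathPos s j) (s j)) (J : Finset (Fin n)) :
    partialWeight s Jᶜ ω ≤ (1 / κ) ^ J.card * pathWeight s ω := by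
  have hcompl : 0 ≤ partialWeight s Jᶜ ω := Finset.prod_nonneg fun j _ => hκ.le.trans (hω j)
  rw [one_div_pow, one_div_mul_eq_div, le_div_iff₀ (pow_pos hκ _), pathWeight,
    ← Finset.prod_mul_prod_compl J, mul_comm]
  exact mul_le_mul_of_nonneg_right (pow_card_le_partialWeight hκ.le hω J) hcompl

theorem pathWeight_nonneg {s : Fin n → Zd d} {ω : Env d}
    (hω : ∀ j : Fin n, 0 ≤ ω (pathPos s j) (s j)) : 0 ≤ pathWeight s ω :=
  Finset.prod_nonneg fun j _ => hω j

theorem integrable_pathWeight {IP : Measure (Env d)} [IsFiniteMeasure IP] {s : Fin n → Zd d}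
    (h : ∀ᵐ ω ∂IP, ∀ j : Fin n, ω (pathPos s j) (s j) ∈ Set.Icc 0 1) :
    Integrable (pathWeight s) IP :=
  Integrable.of_bound (measurable_partialWeight s Finset.univ).aestronglyMeasurable 1 <|
    h.mono fun ω hω => by
      rw [Real.norm_eq_abs, abs_of_nonneg (pathWeight_nonneg fun j => (hω j).1)]
      simpa [partialWeight] using pathWeight_le_partialWeight hω ∅

theorem pow_le_integral_pathWeight {IP : Measure (Env d)} [IsProbabilityMeasure IP]
    {s : Fin n → Zd d} {κ : ℝ} (hκ : 0 ≤ κ)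
    (h : ∀ᵐ ω ∂IP, ∀ j : Fin n, ω (pathPos s j) (s j) ∈ Set.Icc κ 1) :
    κ ^ n ≤ ∫ ω, pathWeight s ω ∂IP := by
  have hint := integrable_pathWeight (h.mono fun ω hω j => ⟨hκ.trans (hω j).1, (hω j).2⟩)
  calc κ ^ n = ∫ _, κ ^ n ∂IP := by simp
    _ ≤ ∫ ω, pathWeight s ω ∂IP := integral_mono_ae (integrable_const _) hint <|
        h.mono fun ω hω => by
          simpa [partialWeight, pathWeight] using
            pow_card_le_partialWeight hκ (fun j => (hω j).1) Finset.univ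

theorem setLIntegral_partialWeight_compl_highSteps {IP : Measure (Env d)}
    [IsProbabilityMeasure IP] (hsh : ShiftInv IP) {ℓ : Fin d → ℝ} {L : ℝ}
    (hind : Indep (SfieldLow ℓ) (Sfield ℓ L) IP) (s : Fin n → Zd d) {k : ℝ}
    {A : Set (Env d)} (hA : MeasurableSet[Sfield ℓ k] A) :
    ∫⁻ ω in A, ENNReal.ofReal (partialWeight s (highSteps s ℓ (k - L))ᶜ ω) ∂IP =
      IP A * ∫⁻ ω, ENNReal.ofReal (partialWeight s (highSteps s ℓ (k - L))ᶜ ω) ∂IP := by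
  set J := (highSteps s ℓ (k - L))ᶜ
  rcases J.eq_empty_or_nonempty with hJ | hJ
  · simp [partialWeight, hJ]
  obtain ⟨j₀, hj₀, hmax⟩ := J.exists_max_image (fun j => dotl (pathPos s j) ℓ) hJ
  have hj₀_low : dotl (pathPos s j₀) ℓ < k - L := by
    simp only [J, highSteps, Finset.mem_compl, Finset.mem_filter, Finset.mem_univ, true_and,
      not_le] at hj₀
    exact hj₀
  -- shifting by `-x_{j₀}` puts the low sites in `{x·ℓ ≤ 0}` and `A` in `S_L`
  refine setLIntegral_eq_measure_mul_lintegral_of_indep_comp (SfieldLow_le ℓ) (Sfield_le ℓ L)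
    hind (hsh.measurePreserving (-pathPos s j₀)) (Sfield_le ℓ k A hA)
    (measurable_shiftE_Sfield ℓ _ (by rw [dotl_neg]; linarith) hA)
    (ENNReal.measurable_ofReal.comp (measurable_partialWeight s J)) ?_
  refine ENNReal.measurable_ofReal.comp (Finset.measurable_prod _ fun j hj => ?_)
  exact measurable_SfieldLow_env_apply ℓ (by rw [dotl_add, dotl_neg]; linarith [hmax j hj]) _

end Path

theorem posterior_density_bound_general {d M n : ℕ} (ℓ : Fin d → ℝ) (κ : ℝ)
    (hκ0 : 0 < κ) (hκ1 : κ < 1) (L : ℕ)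
    (IP : Measure (Env d)) [IsProbabilityMeasure IP] (hsh : ShiftInv IP)
    (hell : ∀ᵐ ω ∂IP, GoodEnv M ω ∧ ∀ x e : Zd d, e ∈ box d M → κ < ω x e)
    (hdep : ∀ A B : Set (Env d), MeasurableSet[SfieldLow ℓ] A →
      MeasurableSet[Sfield ℓ (L : ℝ)] B → IP (A ∩ B) = IP A * IP B)
    (s : Fin n → Zd d) (hs : ∀ j, s j ∈ box d M)
    (k : ℝ) :
    ∀ A : Set (Env d), MeasurableSet[Sfield ℓ k] A →
      postMeasure IP s A ≤
        ENNReal.ofReal ((1 / κ) ^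
            ((Finset.range (n + 1)).filter
              (fun i => k - L ≤ dotl (pathPos s i) ℓ)).card) * IP A := by
  intro A hA
  set J := highSteps s ℓ (k - L)
  have hstep : ∀ᵐ ω ∂IP, ∀ j : Fin n, ω (pathPos s j) (s j) ∈ Set.Icc κ 1 :=
    hell.mono fun ω hω j => ⟨(hω.2 _ _ (hs j)).le, hω.1.le_one _ _⟩
  have hstep₀ : ∀ᵐ ω ∂IP, ∀ j : Fin n, ω (pathPos s j) (s j) ∈ Set.Icc 0 1 :=
    hstep.mono fun ω hω j => ⟨hκ0.le.trans (hω j).1, (hω j).2⟩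
  have hint := integrable_pathWeight hstep₀
  have hnonneg : 0 ≤ᵐ[IP] pathWeight s := hstep₀.mono fun ω hω => pathWeight_nonneg (hω · |>.1)
  have hmass : 0 < ∫ ω, pathWeight s ω ∂IP :=
    (pow_pos hκ0 n).trans_le (pow_le_integral_pathWeight hκ0.le hstep)
  have hlint := ofReal_integral_eq_lintegral_ofReal hint hnonneg
  rw [postMeasure, withDensity_ofReal_div_integral_apply hint hnonneg hmass (Sfield_le ℓ k A hA)]
  refine setLIntegral_div_lintegral_le (g := fun ω => ENNReal.ofReal (partialWeight s Jᶜ ω))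
    ?_ ?_ (setLIntegral_partialWeight_compl_highSteps hsh ((Indep_iff _ _ _).mpr hdep) s hA)
    (by simpa [← hlint] using hmass) (by simp [← hlint]) ENNReal.ofReal_ne_top
  · filter_upwards [hstep₀] with ω hω
    exact ENNReal.ofReal_le_ofReal (pathWeight_le_partialWeight hω Jᶜ)
  · filter_upwards [hstep₀, hstep] with ω hω₀ hω
    rw [← ENNReal.ofReal_mul (by positivity)]
    refine ENNReal.ofReal_le_ofReal ((partialWeight_compl_le hκ0 (hω · |>.1) J).trans ?_)
    gcongr
    · exact pathWeight_nonneg (hω₀ · |>.1)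
    · exact one_le_one_div hκ0 hκ1.le
    · exact card_highSteps_le s ℓ _

/-- if `IP` is `L`-dependent in direction `ℓ` and `κ`-elliptic, then
for any path `w` of range `M` ending at `0` and any `k ≤ 0`, the a-posteriori
measure satisfies `dIP_w|_{S_k} / dIP|_{S_k} ≤ κ^{-card(w ∩ H_{k-L})}`. -/
theorem posterior_density_bound {d M n : ℕ} (ℓ : Fin d → ℝ) (κ : ℝ)
    (hκ0 : 0 < κ) (hκ1 : κ < 1) (L : ℕ)
    (IP : Measure (Env d)) [IsProbabilityMeasure IP] (hsh : ShiftInv IP)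
    (hell : ∀ᵐ ω ∂IP, GoodEnv M ω ∧ ∀ x e : Zd d, e ∈ box d M → κ < ω x e)
    (hdep : ∀ A B : Set (Env d), MeasurableSet[SfieldLow ℓ] A →
      MeasurableSet[Sfield ℓ (L : ℝ)] B → IP (A ∩ B) = IP A * IP B)
    (s : Fin n → Zd d) (hs : ∀ j, s j ∈ box d M)
    (k : ℝ) (hk : k ≤ 0) :
    ∀ A : Set (Env d), MeasurableSet[Sfield ℓ k] A →
      postMeasure IP s A ≤
        ENNReal.ofReal ((1 / κ) ^
            ((Finset.range (n + 1)).filter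
              (fun i => k - L ≤ dotl (pathPos s i) ℓ)).card) * IP A :=
  posterior_density_bound_general ℓ κ hκ0 hκ1 L IP hsh hell hdep s hs k
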